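/- Every nested structure with at least one base is 𝒢-decomposable, where a structure is nested if it contains no two crossing pairings, i.e., no pairings (i,j) and (i',j') with i < i' < j < j'. -/

import Mathlib

/-!
Formalization of higher RNA structures, compositions, decomposability,
folded sequences, alignments and scores, following M. Brinkmeier,
"Structural Alignments of pseudo-knotted RNA-molecules in polynomial time".
-/

namespace RNA

/-- A (raw) RNA structure: a number of bases, a set of pairings and an
optional gap position (`none` = 0-structure, `some k` = 1-structure). -/
structure Struct where
  n : ℕ
  pairs : Finset (ℕ × ℕ)
  gap : Option ℕ
deriving DecidableEq

/-- A structural element: an unpaired base or a pairing. -/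
abbrev Elem : Type := ℕ ⊕ ℕ × ℕ

namespace Struct

/-- Base `i` is paired in `σ`. -/
def Paired (σ : Struct) (i : ℕ) : Prop := ∃ p ∈ σ.pairs, i = p.1 ∨ i = p.2

instance (σ : Struct) (i : ℕ) : Decidable (σ.Paired i) :=
  inferInstanceAs (Decidable (∃ p ∈ σ.pairs, i = p.1 ∨ i = p.2))

/-- `σ` is a well-formed structure: all pairings `(i,j)` satisfy
`1 ≤ i < j ≤ n`, distinct pairings are disjoint as two-element sets, and the
gap (if present) lies in `[0,n]`. -/
def Valid (σ : Struct) : Prop :=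
  (∀ p ∈ σ.pairs, 1 ≤ p.1 ∧ p.1 < p.2 ∧ p.2 ≤ σ.n) ∧
  (∀ p ∈ σ.pairs, ∀ q ∈ σ.pairs, p ≠ q →
    p.1 ≠ q.1 ∧ p.1 ≠ q.2 ∧ p.2 ≠ q.1 ∧ p.2 ≠ q.2) ∧
  (∀ k ∈ σ.gap, k ≤ σ.n)

/-- The unpaired bases of `σ`. -/
def unpairedBases (σ : Struct) : Finset ℕ :=
  (Finset.Icc 1 σ.n).filter (fun i => ¬ σ.Paired i)

/-- The structural elements of `σ`: unpaired bases and pairings. -/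
def elems (σ : Struct) : Finset Elem :=
  σ.unpairedBases.image Sum.inl ∪ σ.pairs.image Sum.inr

/-- The gap of `σ`, defaulting to `0`. -/
def gapD (σ : Struct) : ℕ := σ.gap.getD 0

end Struct

/-- The identity 0-structure: a single unpaired base. -/
def ident0 : Struct := ⟨1, ∅, none⟩

/-- The identity 1-structure: a single pairing with the gap between its bases. -/
def ident1 : Struct := ⟨2, {(1, 2)}, some 1⟩

/-- The empty 0-structure. -/
def empty0 : Struct := ⟨0, ∅, none⟩

/-- The empty 1-structure. -/
def empty1 : Struct := ⟨0, ∅, some 0⟩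

/-- Composition `σ ∘ᵢ τ` of `σ` along an unpaired base `i` with a
0-structure `τ`: base `i` is replaced by the `τ.n` bases of `τ`. -/
def composeBase (σ : Struct) (i : ℕ) (τ : Struct) : Struct where
  n := σ.n + τ.n - 1
  pairs :=
    σ.pairs.image (fun p =>
      ((if p.1 < i then p.1 else p.1 + τ.n - 1),
       (if p.2 < i then p.2 else p.2 + τ.n - 1)))
    ∪ τ.pairs.image (fun q => (q.1 + i - 1, q.2 + i - 1))
  gap := σ.gap.map (fun k => if k < i then k else k + τ.n - 1)

/-- Composition `σ ∘₍ᵢ,ⱼ₎ τ` of `σ` along a pairing `(i,j)` with a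
1-structure `τ`: the pairing is deleted, the first leg of `τ` replaces base
`i` and the second leg replaces base `j`. -/
def composePair (σ : Struct) (i j : ℕ) (τ : Struct) : Struct where
  n := σ.n + τ.n - 2
  pairs :=
    (σ.pairs.erase (i, j)).image (fun p =>
      ((if p.1 < i then p.1 else if p.1 < j then p.1 + τ.gapD - 1 else p.1 + τ.n - 2),
       (if p.2 < i then p.2 else if p.2 < j then p.2 + τ.gapD - 1 else p.2 + τ.n - 2)))
    ∪ τ.pairs.image (fun q =>
      ((if q.1 ≤ τ.gapD then q.1 + i - 1 else q.1 + j - 2),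
       (if q.2 ≤ τ.gapD then q.2 + i - 1 else q.2 + j - 2)))
  gap := σ.gap.map (fun k =>
    if k < i then k else if k < j then k + τ.gapD - 1 else k + τ.n - 2)

/-- The number of bases contributed by base `b` of `τ` in a simultaneous
composition substituting `ρ χ` for the structural element `χ`:
an unpaired base contributes the whole 0-structure, the left (right) end of a
pairing contributes the first (second) leg of the corresponding 1-structure. -/
def contrib (τ : Struct) (ρ : Elem → Struct) (b : ℕ) : ℕ :=
  (if τ.Paired b then 0 else (ρ (Sum.inl b)).n)
  + ∑ p ∈ τ.pairs.filter (fun p => p.1 = b), (ρ (Sum.inr p)).gapD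
  + ∑ p ∈ τ.pairs.filter (fun p => p.2 = b), ((ρ (Sum.inr p)).n - (ρ (Sum.inr p)).gapD)

/-- The position in the composed structure of the first base replacing base
`b` of `τ`. -/
def start (τ : Struct) (ρ : Elem → Struct) (b : ℕ) : ℕ :=
  1 + ∑ b' ∈ Finset.Ico 1 b, contrib τ ρ b'

/-- Simultaneous composition `τ ∘ (ρ χ₁, …, ρ χ_ι)` of `τ` with one structure
for each of its structural elements (a 0-structure for each unpaired base, a
1-structure for each pairing). -/
def composeAll (τ : Struct) (ρ : Elem → Struct) : Struct where
  n := ∑ b ∈ Finset.Icc 1 τ.n, contrib τ ρ b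
  pairs :=
    (τ.unpairedBases.biUnion (fun b => (ρ (Sum.inl b)).pairs.image
      (fun q => (q.1 + start τ ρ b - 1, q.2 + start τ ρ b - 1))))
    ∪ (τ.pairs.biUnion (fun p => (ρ (Sum.inr p)).pairs.image
      (fun q =>
        ((if q.1 ≤ (ρ (Sum.inr p)).gapD then q.1 + start τ ρ p.1 - 1
          else q.1 - (ρ (Sum.inr p)).gapD + start τ ρ p.2 - 1),
         (if q.2 ≤ (ρ (Sum.inr p)).gapD then q.2 + start τ ρ p.1 - 1
          else q.2 - (ρ (Sum.inr p)).gapD + start τ ρ p.2 - 1)))))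
  gap := τ.gap.map (fun k => ∑ b ∈ Finset.Icc 1 k, contrib τ ρ b)

/-- A structure is `Γ`-decomposable if it is an identity or a simultaneous
composition of a generator `τ ∈ Γ` with `Γ`-decomposable structures, one of
the appropriate type for each structural element of `τ`. -/
inductive Decomposable (Γ : Finset Struct) : Struct → Prop
  | isId0 : Decomposable Γ ident0
  | isId1 : Decomposable Γ ident1
  | comp (τ : Struct) (ρ : Elem → Struct) :
      τ ∈ Γ →
      (∀ i, Sum.inl i ∈ τ.elems → (ρ (Sum.inl i)).gap = none) →
      (∀ p, Sum.inr p ∈ τ.elems → (ρ (Sum.inr p)).gap ≠ none) →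
      (∀ i, Sum.inl i ∈ τ.elems → Decomposable Γ (ρ (Sum.inl i))) →
      (∀ p, Sum.inr p ∈ τ.elems → Decomposable Γ (ρ (Sum.inr p))) →
      Decomposable Γ (composeAll τ ρ)

/-! The generators of the paper. -/

def gConcat  : Struct := ⟨2, ∅, none⟩
def gLoop    : Struct := ⟨2, {(1, 2)}, none⟩
def gDisconn : Struct := ⟨2, ∅, some 1⟩
def gLembed  : Struct := ⟨1, ∅, some 1⟩
def gRembed  : Struct := ⟨1, ∅, some 0⟩
def gLconcat : Struct := ⟨3, {(2, 3)}, some 2⟩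
def gRconcat : Struct := ⟨3, {(1, 2)}, some 1⟩
def gLinsert : Struct := ⟨3, {(1, 3)}, some 2⟩
def gRinsert : Struct := ⟨3, {(1, 3)}, some 1⟩
def gLwrap   : Struct := ⟨4, {(1, 3), (2, 4)}, some 3⟩
def gRwrap   : Struct := ⟨4, {(1, 3), (2, 4)}, some 1⟩
def gNest    : Struct := ⟨4, {(1, 4), (2, 3)}, some 2⟩
def gCross   : Struct := ⟨4, {(1, 3), (2, 4)}, some 2⟩

/-- The generator set `𝒢` of the paper. -/
def calG : Finset Struct :=
  {gConcat, gLoop, gDisconn, gLembed, gRembed, gLconcat, gRconcat,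
   gLinsert, gRinsert, gLwrap, gRwrap, gNest, gCross}

/-! Folded sequences.  The blank `∘` is represented by `none : Option α`. -/

/-- A folded sequence: a structure together with a word (the letter of base
`i` is entry `i-1` of the list). -/
structure FSeq (α : Type) where
  str : Struct
  word : List α

/-- A folded sequence is well-formed if the word has exactly one letter for
each base. -/
def FSeq.WF {α : Type} (F : FSeq α) : Prop := F.word.length = F.str.n

/-- The label of base `i` (1-based) in the word `t`, blanks off the end. -/
def labAt {α : Type} (t : List (Option α)) (i : ℕ) : Option α := t.getD (i - 1) none

/-- Base `i` (1-based) of the word `t` carries a non-blank letter. -/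
def kept {α : Type} (t : List (Option α)) (i : ℕ) : Bool := (labAt t i).isSome

/-- The number of non-blank bases among `1, …, i`; this is the new index of
base `i` after removing all blanks. -/
def rank {α : Type} (t : List (Option α)) (i : ℕ) : ℕ :=
  ((Finset.Icc 1 i).filter (fun j => kept t j = true)).card

/-- The projection `π(σ,t)`: remove all bases labelled with the blank,
removing a pairing entirely if at least one of its bases is blank. -/
def proj {α : Type} (σ : Struct) (t : List (Option α)) : FSeq α where
  str :=
    { n := rank t σ.n
      pairs := (σ.pairs.filter (fun p => kept t p.1 = true ∧ kept t p.2 = true)).image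
          (fun p => (rank t p.1, rank t p.2))
      gap := σ.gap.map (rank t) }
  word := (t.take σ.n).reduceOption

/-- `(σ, t1, t2)` is a structural alignment of the folded sequences `F1` and
`F2`: projecting the two rows yields `F1` and `F2`, and each pairing of `σ`
is labelled by two letters or two blanks in each row. -/
def IsAlignment {α : Type} (F1 F2 : FSeq α) (σ : Struct)
    (t1 t2 : List (Option α)) : Prop :=
  t1.length = σ.n ∧ t2.length = σ.n ∧ proj σ t1 = F1 ∧ proj σ t2 = F2 ∧
  ∀ p ∈ σ.pairs, kept t1 p.1 = kept t1 p.2 ∧ kept t2 p.1 = kept t2 p.2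

/-- A score function: nonnegative scores for aligned bases and aligned
pairings, vanishing on exact matches. -/
structure ScoreFn (α : Type) where
  base : Option α → Option α → ℝ
  pair : Option α × Option α → Option α × Option α → ℝ
  base_nonneg : ∀ x y, 0 ≤ base x y
  pair_nonneg : ∀ u v, 0 ≤ pair u v
  base_refl : ∀ x, base x x = 0
  pair_refl : ∀ x y : α, pair (some x, some y) (some x, some y) = 0
  pair_blank : pair (none, none) (none, none) = 0

/-- The score of an alignment: the sum of the scores of its structural
elements. -/
noncomputable def alignScore {α : Type} (S : ScoreFn α) (σ : Struct)
    (t1 t2 : List (Option α)) : ℝ :=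
  (∑ i ∈ σ.unpairedBases, S.base (labAt t1 i) (labAt t2 i))
  + ∑ p ∈ σ.pairs, S.pair (labAt t1 p.1, labAt t1 p.2) (labAt t2 p.1, labAt t2 p.2)

/-- The score of a minimum alignment of `F1` and `F2`. -/
noncomputable def minScore {α : Type} (S : ScoreFn α) (F1 F2 : FSeq α) : ℝ :=
  sInf {x : ℝ | ∃ σ t1 t2, IsAlignment F1 F2 σ t1 t2 ∧ alignScore S σ t1 t2 = x}

/-- `i` is an end of some pairing in `P`. -/
def endOf (P : Finset (ℕ × ℕ)) (i : ℕ) : Prop := ∃ p ∈ P, i = p.1 ∨ i = p.2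

instance (P : Finset (ℕ × ℕ)) (i : ℕ) : Decidable (endOf P i) :=
  inferInstanceAs (Decidable (∃ p ∈ P, i = p.1 ∨ i = p.2))

/-- The number of bases in `1, …, i` which are not ends of pairings in `P`;
the new index of base `i` after removing the pairings in `P` with their
bases. -/
def rrank (P : Finset (ℕ × ℕ)) (i : ℕ) : ℕ :=
  ((Finset.Icc 1 i).filter (fun j => ¬ endOf P j)).card

/-- `σ ∖ P`: remove from `σ` all pairings in `P` together with their bases. -/
def removePairs (σ : Struct) (P : Finset (ℕ × ℕ)) : Struct where
  n := rrank P σ.n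
  pairs := (σ.pairs \ P).image (fun p => (rrank P p.1, rrank P p.2))
  gap := σ.gap.map (rrank P)

/-- An alignment is `Γ`-semi-decomposable if after removing a set of pairings
which are matched against blanks in one of the two rows, the remaining core
structure is `Γ`-decomposable. -/
def SemiDecomposable {α : Type} (Γ : Finset Struct) (σ : Struct)
    (t1 t2 : List (Option α)) : Prop :=
  ∃ P ⊆ σ.pairs,
    (∀ p ∈ P, (labAt t1 p.1 = none ∧ labAt t1 p.2 = none) ∨
              (labAt t2 p.1 = none ∧ labAt t2 p.2 = none)) ∧
    Decomposable Γ (removePairs σ P)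

/-! Restrictions of structures and folded sequences to intervals. -/

/-- Base `i` survives the restriction of `σ` to the interval `[a,b]`:
it lies in `[a,b]` and is not an end of a pairing reaching outside `[a,b]`. -/
def keptIv (σ : Struct) (a b i : ℕ) : Prop :=
  a ≤ i ∧ i ≤ b ∧
    ¬ ∃ p ∈ σ.pairs, (i = p.1 ∨ i = p.2) ∧ ¬ (a ≤ p.1 ∧ p.1 ≤ b ∧ a ≤ p.2 ∧ p.2 ≤ b)

instance (σ : Struct) (a b i : ℕ) : Decidable (keptIv σ a b i) :=
  inferInstanceAs (Decidable (_ ∧ _ ∧ ¬ ∃ p ∈ σ.pairs, _))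

/-- New index of base `i` in the restriction of `σ` to `[a,b]`. -/
def rankIv (σ : Struct) (a b i : ℕ) : ℕ :=
  ((Finset.Icc 1 i).filter (fun j => keptIv σ a b j)).card

/-- The restriction `σ[a,b]` of a structure to the interval `[a,b]`,
removing all bases outside `[a,b]` and all pairings with at least one end
outside `[a,b]` (together with their bases). -/
def Struct.restrict0 (σ : Struct) (a b : ℕ) : Struct where
  n := rankIv σ a b σ.n
  pairs := (σ.pairs.filter (fun p => a ≤ p.1 ∧ p.1 ≤ b ∧ a ≤ p.2 ∧ p.2 ≤ b)).image
      (fun p => (rankIv σ a b p.1, rankIv σ a b p.2))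
  gap := none

/-- `i` lies in the interval `[a,b]`. -/
def inIv (a b i : ℕ) : Prop := a ≤ i ∧ i ≤ b

instance (a b i : ℕ) : Decidable (inIv a b i) := inferInstanceAs (Decidable (_ ∧ _))

/-- Base `i` survives the restriction of `σ` to the pair of intervals
`[a,b]`, `[c,d]`. -/
def keptIv2 (σ : Struct) (a b c d i : ℕ) : Prop :=
  (inIv a b i ∨ inIv c d i) ∧
    ¬ ∃ p ∈ σ.pairs, (i = p.1 ∨ i = p.2) ∧
      ¬ ((inIv a b p.1 ∨ inIv c d p.1) ∧ (inIv a b p.2 ∨ inIv c d p.2))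

instance (σ : Struct) (a b c d i : ℕ) : Decidable (keptIv2 σ a b c d i) :=
  inferInstanceAs (Decidable (_ ∧ ¬ ∃ p ∈ σ.pairs, _))

/-- New index of base `i` in the restriction of `σ` to `[a,b] ; [c,d]`. -/
def rankIv2 (σ : Struct) (a b c d i : ℕ) : ℕ :=
  ((Finset.Icc 1 i).filter (fun j => keptIv2 σ a b c d j)).card

/-- The restriction `σ[a,b; c,d]` of a structure to two intervals, a
1-structure with the gap between them; pairings with at least one end outside
`[a,b] ∪ [c,d]` are removed together with their bases. -/
def Struct.restrict1 (σ : Struct) (a b c d : ℕ) : Struct where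
  n := rankIv2 σ a b c d σ.n
  pairs := (σ.pairs.filter (fun p =>
      (inIv a b p.1 ∨ inIv c d p.1) ∧ (inIv a b p.2 ∨ inIv c d p.2))).image
      (fun p => (rankIv2 σ a b c d p.1, rankIv2 σ a b c d p.2))
  gap := some (rankIv2 σ a b c d b)

/-- The restriction `(σ,s)[a,b]` of a folded sequence. -/
def FSeq.restrict0 {α : Type} [Inhabited α] (F : FSeq α) (a b : ℕ) : FSeq α where
  str := F.str.restrict0 a b
  word := ((List.range F.str.n).filter (fun idx => decide (keptIv F.str a b (idx + 1)))).map
      (fun idx => F.word.getD idx default)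

/-- The restriction `(σ,s)[a,b; c,d]` of a folded sequence. -/
def FSeq.restrict1 {α : Type} [Inhabited α] (F : FSeq α) (a b c d : ℕ) : FSeq α where
  str := F.str.restrict1 a b c d
  word := ((List.range F.str.n).filter (fun idx => decide (keptIv2 F.str a b c d (idx + 1)))).map
      (fun idx => F.word.getD idx default)

/-- The letter at base `i` of a folded sequence. -/
def FSeq.lab {α : Type} [Inhabited α] (F : FSeq α) (i : ℕ) : α := F.word.getD (i - 1) default

/-! τ-splittings. -/

/-- A `τ`-splitting of `σ`: a partition of `[1,σ.n]` into `τ.n` consecutive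
(possibly empty) intervals `I^b = [e (b-1) + 1, e b]`, respecting the gaps. -/
structure Splitting (τ σ : Struct) where
  e : ℕ → ℕ
  e_zero : e 0 = 0
  e_last : e τ.n = σ.n
  mono : Monotone e
  gap_ok : ∀ g ∈ τ.gap, ∀ k ∈ σ.gap, e g = k

namespace Splitting

variable {τ σ : Struct}

/-- Base `i` of `σ` lies in the `b`-th interval of the splitting. -/
def inBlock (sp : Splitting τ σ) (b i : ℕ) : Prop := sp.e (b - 1) < i ∧ i ≤ sp.e b

instance (sp : Splitting τ σ) (b i : ℕ) : Decidable (sp.inBlock b i) :=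
  inferInstanceAs (Decidable (_ ∧ _))

/-- The pairing `p` of `σ` is incompatible with the splitting: its two ends
lie in two different intervals whose indices do not form a pairing of `τ`. -/
def Incompat (sp : Splitting τ σ) (p : ℕ × ℕ) : Prop :=
  ∃ b ∈ Finset.Icc 1 τ.n, ∃ c ∈ Finset.Icc 1 τ.n,
    sp.inBlock b p.1 ∧ sp.inBlock c p.2 ∧ b ≠ c ∧ (b, c) ∉ τ.pairs

instance (sp : Splitting τ σ) (p : ℕ × ℕ) : Decidable (sp.Incompat p) :=
  inferInstanceAs (Decidable (∃ b ∈ Finset.Icc 1 τ.n, ∃ c ∈ Finset.Icc 1 τ.n,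
    sp.inBlock b p.1 ∧ sp.inBlock c p.2 ∧ b ≠ c ∧ (b, c) ∉ τ.pairs))

/-- The set of pairings of `σ` incompatible with the splitting. -/
def incompatSet (sp : Splitting τ σ) : Finset (ℕ × ℕ) :=
  σ.pairs.filter (fun p => sp.Incompat p)

/-- Base `i` of `σ` survives the removal of all incompatible pairings. -/
def surv (sp : Splitting τ σ) (i : ℕ) : Prop :=
  1 ≤ i ∧ i ≤ σ.n ∧ ¬ ∃ p ∈ σ.pairs, sp.Incompat p ∧ (i = p.1 ∨ i = p.2)

instance (sp : Splitting τ σ) (i : ℕ) : Decidable (sp.surv i) :=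
  inferInstanceAs (Decidable (_ ∧ _ ∧ ¬ ∃ p ∈ σ.pairs, _))

/-- The number of surviving bases among `1, …, x`. -/
def survCount (sp : Splitting τ σ) (x : ℕ) : ℕ :=
  ((Finset.Icc 1 x).filter (fun i => sp.surv i)).card

/-- The splitting is proper: after removing all incompatible pairings the
induced splitting contains no empty interval. -/
def Proper (sp : Splitting τ σ) : Prop :=
  ∀ b ∈ Finset.Icc 1 τ.n, sp.survCount (sp.e (b - 1)) < sp.survCount (sp.e b)

end Splitting

/-- The score of a minimum `Γ`-semi-decomposable alignment of `F1` and `F2`. -/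
noncomputable def minScoreDecomp {α : Type} (Γ : Finset Struct) (S : ScoreFn α)
    (F1 F2 : FSeq α) : ℝ :=
  sInf {x : ℝ | ∃ σ t1 t2, IsAlignment F1 F2 σ t1 t2 ∧
    SemiDecomposable Γ σ t1 t2 ∧ alignScore S σ t1 t2 = x}


/-- A structure is nested if it contains no two crossing pairings, i.e. no
pairings `(i,j)` and `(i',j')` with `i < i' < j < j'`. -/
def Struct.Nested (σ : Struct) : Prop :=
  ¬ ∃ p ∈ σ.pairs, ∃ q ∈ σ.pairs, p.1 < q.1 ∧ q.1 < p.2 ∧ p.2 < q.2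

/-!
Induction on `Struct.complexity`, splitting every nonempty nested structure along a generator
into smaller nested structures. A 0-structure is cut by `concat` after the pairing (or unpaired
base) at position 1, unless base 1 pairs with base `n`, in which case it is a `loop` around a
1-structure with gap after base 1. A 1-structure whose gap is crossed by no pairing is cut at
the gap by `lconcat`, or is an embedded 0-structure if the gap is at an end. Otherwise, by
nestedness, the outermost pairing `(i, j)` crossing the gap has cuts right before `i` and right
after `j`, so the structure splits by `lconcat` at `i - 1`, by `rconcat` at `j`, or, when
`(i, j) = (1, n)`, is a `nest` around the 1-structure strictly inside that pairing.
-/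

attribute [ext] Struct

def shiftPairs (P : Finset (ℕ × ℕ)) (m : ℕ) : Finset (ℕ × ℕ) :=
  P.image fun p => (p.1 + m, p.2 + m)

lemma shiftPairs_zero (P : Finset (ℕ × ℕ)) : shiftPairs P 0 = P := by
  simp [shiftPairs]

lemma composeAll_gConcat (ρ : Elem → Struct) :
    composeAll gConcat ρ = ⟨(ρ (.inl 1)).n + (ρ (.inl 2)).n,
      (ρ (.inl 1)).pairs ∪ shiftPairs (ρ (.inl 2)).pairs (ρ (.inl 1)).n, none⟩ := by
  have hu : gConcat.unpairedBases = {1, 2} := by decide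
  simp only [composeAll, hu]
  simp only [gConcat, Finset.Icc_ofNat_ofNat, contrib, Struct.Paired, Finset.notMem_empty,
      false_and, exists_const, ↓reduceIte, Finset.filter_empty, Finset.sum_empty, add_zero,
      Finset.mem_singleton, OfNat.one_ne_ofNat, not_false_eq_true, Finset.sum_insert,
      Finset.sum_singleton, start, Finset.biUnion_insert, Std.le_refl, Finset.Ico_eq_empty_of_le,
      add_tsub_cancel_right, Prod.mk.eta, Finset.image_id', Finset.singleton_biUnion,
      Nat.Ico_succ_singleton, Finset.biUnion_empty, Finset.union_empty, Option.map_none, shiftPairs,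
      Struct.mk.injEq, and_true, true_and]
  congr 1
  exact Finset.image_congr fun q _ => by ext <;> simp only <;> omega

lemma composeAll_gLoop (ρ : Elem → Struct)
    (hg : (ρ (.inr (1, 2))).gapD ≤ (ρ (.inr (1, 2))).n) :
    composeAll gLoop ρ = ⟨(ρ (.inr (1, 2))).n, (ρ (.inr (1, 2))).pairs, none⟩ := by
  have hu : gLoop.unpairedBases = ∅ := by decide
  simp only [composeAll, hu]
  simp only [gLoop, Finset.Icc_ofNat_ofNat, contrib, Struct.Paired, Finset.mem_singleton,
      exists_eq_left, Finset.filter_singleton, OfNat.one_ne_ofNat, not_false_eq_true,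
      Finset.sum_insert, or_false, ↓reduceIte, Finset.sum_singleton, zero_add, OfNat.ofNat_ne_one,
      Finset.sum_empty, add_zero, or_true, start, Finset.biUnion_empty, Finset.singleton_biUnion,
      Std.le_refl, Finset.Ico_eq_empty_of_le, add_tsub_cancel_right, Nat.Ico_succ_singleton,
      Finset.empty_union, Option.map_none, Struct.mk.injEq, and_true]
  refine ⟨by omega, ?_⟩
  conv_rhs => rw [← Finset.image_id (s := (ρ (.inr (1, 2))).pairs)]
  exact Finset.image_congr fun q _ => by ext <;> simp only [id] <;> split_ifs <;> omega

lemma composeAll_gLembed (ρ : Elem → Struct) :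
    composeAll gLembed ρ = ⟨(ρ (.inl 1)).n, (ρ (.inl 1)).pairs, some (ρ (.inl 1)).n⟩ := by
  have hu : gLembed.unpairedBases = {1} := by decide
  simp only [composeAll, hu]
  simp [start, contrib, gLembed, Struct.Paired]

lemma composeAll_gRembed (ρ : Elem → Struct) :
    composeAll gRembed ρ = ⟨(ρ (.inl 1)).n, (ρ (.inl 1)).pairs, some 0⟩ := by
  have hu : gRembed.unpairedBases = {1} := by decide
  simp only [composeAll, hu]
  simp [start, contrib, gRembed, Struct.Paired]

lemma composeAll_gLconcat (ρ : Elem → Struct)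
    (hg : (ρ (.inr (2, 3))).gapD ≤ (ρ (.inr (2, 3))).n) :
    composeAll gLconcat ρ = ⟨(ρ (.inl 1)).n + (ρ (.inr (2, 3))).n,
      (ρ (.inl 1)).pairs ∪ shiftPairs (ρ (.inr (2, 3))).pairs (ρ (.inl 1)).n,
      some ((ρ (.inl 1)).n + (ρ (.inr (2, 3))).gapD)⟩ := by
  have hu : gLconcat.unpairedBases = {1} := by decide
  simp only [composeAll, hu]
  simp only [gLconcat, Finset.Icc_ofNat_ofNat, contrib, Struct.Paired, Finset.mem_singleton,
      exists_eq_left, Finset.filter_singleton, Finset.mem_insert, OfNat.one_ne_ofNat, or_self,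
      not_false_eq_true, Finset.sum_insert, ↓reduceIte, OfNat.ofNat_ne_one, Finset.sum_empty,
      add_zero, Nat.reduceEqDiff, or_false, Finset.sum_singleton, zero_add, Nat.succ_ne_self,
      or_true, start, Finset.singleton_biUnion, Std.le_refl, Finset.Ico_eq_empty_of_le,
      add_tsub_cancel_right, Prod.mk.eta, Finset.image_id', Nat.Ico_succ_singleton,
      Finset.Ico_ofNat_ofNat, Option.map_some, shiftPairs, Struct.mk.injEq, Nat.add_left_cancel_iff,
      and_true]
  refine ⟨by omega, ?_⟩
  congr 1
  exact Finset.image_congr fun q _ => by ext <;> simp only <;> split_ifs <;> omega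

lemma composeAll_gRconcat (ρ : Elem → Struct)
    (hg : (ρ (.inr (1, 2))).gapD ≤ (ρ (.inr (1, 2))).n) :
    composeAll gRconcat ρ = ⟨(ρ (.inr (1, 2))).n + (ρ (.inl 3)).n,
      shiftPairs (ρ (.inl 3)).pairs (ρ (.inr (1, 2))).n ∪ (ρ (.inr (1, 2))).pairs,
      some (ρ (.inr (1, 2))).gapD⟩ := by
  have hu : gRconcat.unpairedBases = {3} := by decide
  simp only [composeAll, hu]
  simp only [gRconcat, Finset.Icc_ofNat_ofNat, contrib, Struct.Paired, Finset.mem_singleton,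
      exists_eq_left, Finset.filter_singleton, Finset.mem_insert, OfNat.one_ne_ofNat, or_self,
      not_false_eq_true, Finset.sum_insert, or_false, ↓reduceIte, Finset.sum_singleton, zero_add,
      OfNat.ofNat_ne_one, Finset.sum_empty, add_zero, Nat.reduceEqDiff, or_true, Nat.succ_ne_self,
      start, Finset.singleton_biUnion, Finset.Ico_ofNat_ofNat, Std.le_refl,
      Finset.Ico_eq_empty_of_le, add_tsub_cancel_right, Nat.Ico_succ_singleton, Option.map_some,
      Finset.Icc_self, shiftPairs, Struct.mk.injEq, and_true]
  refine ⟨by omega, ?_⟩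
  congr 1
  · exact Finset.image_congr fun q _ => by ext <;> simp only <;> omega
  · conv_rhs => rw [← Finset.image_id (s := (ρ (.inr (1, 2))).pairs)]
    exact Finset.image_congr fun q _ => by ext <;> simp only [id] <;> split_ifs <;> omega

lemma composeAll_gNest (ρ : Elem → Struct) (ho : ρ (.inr (1, 4)) = ident1)
    (hg : (ρ (.inr (2, 3))).gapD ≤ (ρ (.inr (2, 3))).n) :
    composeAll gNest ρ = ⟨(ρ (.inr (2, 3))).n + 2,
      insert (1, (ρ (.inr (2, 3))).n + 2) (shiftPairs (ρ (.inr (2, 3))).pairs 1),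
      some ((ρ (.inr (2, 3))).gapD + 1)⟩ := by
  have hu : gNest.unpairedBases = ∅ := by decide
  have hn : ident1.n = 2 := rfl
  have hp : ident1.pairs = {(1, 2)} := rfl
  have hi : ident1.gapD = 1 := rfl
  simp only [composeAll, hu]
  simp only [gNest, Finset.Icc_ofNat_ofNat, contrib, Struct.Paired, Finset.mem_insert,
      Finset.mem_singleton, exists_eq_or_imp, ↓existsAndEq, true_and, Finset.filter_insert,
      Finset.filter_singleton, OfNat.one_ne_ofNat, or_self, not_false_eq_true, Finset.sum_insert,
      or_false, ↓reduceIte, OfNat.ofNat_ne_one, insert_empty_eq, Finset.sum_singleton, ho, hi,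
      zero_add, Finset.sum_empty, add_zero, Nat.reduceEqDiff, or_true, Nat.succ_ne_self, hn,
      Nat.add_one_sub_one, start, Finset.biUnion_empty, Finset.biUnion_insert, Std.le_refl,
      Finset.Ico_eq_empty_of_le, add_tsub_cancel_right, Finset.Ico_ofNat_ofNat, hp,
      Finset.image_singleton, Nat.not_ofNat_le_one, add_tsub_cancel_left, Finset.singleton_biUnion,
      Nat.Ico_succ_singleton, Nat.reduceAdd, Finset.singleton_union, Finset.union_insert,
      Finset.empty_union, Option.map_some, shiftPairs, Struct.mk.injEq, Option.some.injEq]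
  refine ⟨by omega, ?_, by omega⟩
  congr 1
  · congr 1
    omega
  · exact Finset.image_congr fun q _ => by ext <;> simp only <;> split_ifs <;> omega

namespace Struct

def IsCut (σ : Struct) (m : ℕ) : Prop := ∀ p ∈ σ.pairs, p.2 ≤ m ∨ m < p.1

instance (σ : Struct) (m : ℕ) : Decidable (σ.IsCut m) :=
  inferInstanceAs (Decidable (∀ p ∈ σ.pairs, _))

def slice (σ : Struct) (a b : ℕ) (g : Option ℕ) : Struct :=
  ⟨b - a, (σ.pairs.filter fun p => a < p.1 ∧ p.2 ≤ b).image fun p => (p.1 - a, p.2 - a), g⟩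

variable {σ : Struct}

@[simp] lemma slice_n (a b : ℕ) (g : Option ℕ) : (σ.slice a b g).n = b - a := rfl

@[simp] lemma slice_gap (a b : ℕ) (g : Option ℕ) : (σ.slice a b g).gap = g := rfl

@[simp] lemma slice_gapD (a b k : ℕ) : (σ.slice a b (some k)).gapD = k := rfl

lemma shiftPairs_slice_pairs (hv : σ.Valid) (a b : ℕ) (g : Option ℕ) :
    shiftPairs (σ.slice a b g).pairs a = σ.pairs.filter fun p => a < p.1 ∧ p.2 ≤ b := by
  rw [slice, shiftPairs, Finset.image_image]
  conv_rhs => rw [← Finset.image_id (s := σ.pairs.filter _)]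
  refine Finset.image_congr fun p hp => ?_
  obtain ⟨hp, hap, -⟩ := Finset.mem_filter.mp hp
  have := hv.1 p hp
  ext <;> simp only [Function.comp, id] <;> omega

lemma pairs_eq_union_of_isCut (hv : σ.Valid) {m : ℕ} (hcut : σ.IsCut m) (g g' : Option ℕ) :
    σ.pairs = (σ.slice 0 m g).pairs ∪ shiftPairs (σ.slice m σ.n g').pairs m := by
  rw [← shiftPairs_zero (σ.slice 0 m g).pairs, shiftPairs_slice_pairs hv,
    shiftPairs_slice_pairs hv, ← Finset.filter_or, Finset.filter_true_of_mem]
  intro p hp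
  have := hv.1 p hp
  rcases hcut p hp with h | h <;> omega

lemma pairs_eq_insert_of_mem (hv : σ.Valid) (h1n : (1, σ.n) ∈ σ.pairs) (g : Option ℕ) :
    σ.pairs = insert (1, σ.n) (shiftPairs (σ.slice 1 (σ.n - 1) g).pairs 1) := by
  rw [shiftPairs_slice_pairs hv]
  ext p
  simp only [Finset.mem_insert, Finset.mem_filter]
  constructor
  · intro hp
    by_cases hpe : p = (1, σ.n)
    · exact Or.inl hpe
    · have := hv.1 p hp
      have := hv.2.1 p hp _ h1n hpe
      exact Or.inr ⟨hp, by omega, by omega⟩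
  · rintro (rfl | ⟨hp, -⟩) <;> assumption

lemma Valid.slice (hv : σ.Valid) {a b : ℕ} {g : Option ℕ} (hg : ∀ k ∈ g, k ≤ b - a) :
    (σ.slice a b g).Valid := by
  refine ⟨?_, ?_, hg⟩
  · simp only [Struct.slice, Finset.mem_image, Finset.mem_filter]
    rintro _ ⟨p, ⟨hp, hap, hpb⟩, rfl⟩
    have := hv.1 p hp
    omega
  · simp only [Struct.slice, Finset.mem_image, Finset.mem_filter]
    rintro _ ⟨p, ⟨hp, hap, -⟩, rfl⟩ _ ⟨q, ⟨hq, haq, -⟩, rfl⟩ hne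
    have hpq : p ≠ q := by rintro rfl; exact hne rfl
    have := hv.1 p hp
    have := hv.1 q hq
    have := hv.2.1 p hp q hq hpq
    omega

lemma Nested.slice (hv : σ.Valid) (hnest : σ.Nested) (a b : ℕ) (g : Option ℕ) :
    (σ.slice a b g).Nested := by
  simp only [Struct.Nested, Struct.slice, Finset.mem_image, Finset.mem_filter]
  rintro ⟨_, ⟨p, ⟨hp, hap, -⟩, rfl⟩, _, ⟨q, ⟨hq, haq, -⟩, rfl⟩, h⟩
  have := hv.1 p hp
  have := hv.1 q hq
  exact hnest ⟨p, hp, q, hq, by omega⟩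

lemma Valid.withGap (hv : σ.Valid) {g : Option ℕ} (hg : ∀ k ∈ g, k ≤ σ.n) :
    ({ σ with gap := g } : Struct).Valid :=
  ⟨hv.1, hv.2.1, hg⟩

lemma decomposable_concat (hv : σ.Valid) (hg : σ.gap = none) {m : ℕ} (hcut : σ.IsCut m)
    (hm : m ≤ σ.n) (hl : Decomposable calG (σ.slice 0 m none))
    (hr : Decomposable calG (σ.slice m σ.n none)) : Decomposable calG σ := by
  let ρ : Elem → Struct := fun e =>
    if e = .inl 1 then σ.slice 0 m none else σ.slice m σ.n none
  have h1 : ρ (.inl 1) = σ.slice 0 m none := if_pos rfl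
  have h2 : ρ (.inl 2) = σ.slice m σ.n none := if_neg (by decide)
  have hσ : composeAll gConcat ρ = σ := by
    rw [composeAll_gConcat, h1, h2]
    exact Struct.ext (by simp only [slice_n]; omega)
      (pairs_eq_union_of_isCut hv hcut _ _).symm hg.symm
  have hel : gConcat.elems = {.inl 1, .inl 2} := by decide
  rw [← hσ]
  refine Decomposable.comp _ _ (by decide) ?_ ?_ ?_ ?_ <;> simp [hel, h1, h2, hl, hr]

lemma decomposable_loop (hg : σ.gap = none) (hn : 1 ≤ σ.n)
    (h : Decomposable calG { σ with gap := some 1 }) : Decomposable calG σ := by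
  have hσ : composeAll gLoop (fun _ => { σ with gap := some 1 }) = σ := by
    rw [composeAll_gLoop (fun _ => { σ with gap := some 1 }) hn]
    exact Struct.ext rfl rfl hg.symm
  have hel : gLoop.elems = {.inr (1, 2)} := by decide
  rw [← hσ]
  refine Decomposable.comp _ _ (by decide) ?_ ?_ ?_ ?_ <;> simp [hel, h]

lemma decomposable_lembed (hg : σ.gap = some σ.n)
    (h : Decomposable calG { σ with gap := none }) : Decomposable calG σ := by
  have hσ : composeAll gLembed (fun _ => { σ with gap := none }) = σ := by
    rw [composeAll_gLembed]
    exact Struct.ext rfl rfl hg.symm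
  have hel : gLembed.elems = {.inl 1} := by decide
  rw [← hσ]
  refine Decomposable.comp _ _ (by decide) ?_ ?_ ?_ ?_ <;> simp [hel, h]

lemma decomposable_rembed (hg : σ.gap = some 0)
    (h : Decomposable calG { σ with gap := none }) : Decomposable calG σ := by
  have hσ : composeAll gRembed (fun _ => { σ with gap := none }) = σ := by
    rw [composeAll_gRembed]
    exact Struct.ext rfl rfl hg.symm
  have hel : gRembed.elems = {.inl 1} := by decide
  rw [← hσ]
  refine Decomposable.comp _ _ (by decide) ?_ ?_ ?_ ?_ <;> simp [hel, h]

lemma decomposable_lconcat (hv : σ.Valid) {k : ℕ} (hg : σ.gap = some k) (hk : k ≤ σ.n)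
    {m : ℕ} (hcut : σ.IsCut m) (hmk : m ≤ k) (hl : Decomposable calG (σ.slice 0 m none))
    (hr : Decomposable calG (σ.slice m σ.n (some (k - m)))) : Decomposable calG σ := by
  let ρ : Elem → Struct := fun e =>
    if e = .inl 1 then σ.slice 0 m none else σ.slice m σ.n (some (k - m))
  have h1 : ρ (.inl 1) = σ.slice 0 m none := if_pos rfl
  have h2 : ρ (.inr (2, 3)) = σ.slice m σ.n (some (k - m)) := if_neg (by decide)
  have hσ : composeAll gLconcat ρ = σ := by
    rw [composeAll_gLconcat _ (by rw [h2, slice_gapD, slice_n]; omega), h1, h2]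
    refine Struct.ext (by simp only [slice_n]; omega) (pairs_eq_union_of_isCut hv hcut _ _).symm ?_
    rw [hg]
    exact congrArg some (by simp only [slice_gapD, slice_n]; omega)
  have hel : gLconcat.elems = {.inl 1, .inr (2, 3)} := by decide
  rw [← hσ]
  refine Decomposable.comp _ _ (by decide) ?_ ?_ ?_ ?_ <;> simp [hel, h1, h2, hl, hr]

lemma decomposable_rconcat (hv : σ.Valid) {k : ℕ} (hg : σ.gap = some k) {m : ℕ}
    (hcut : σ.IsCut m) (hkm : k ≤ m) (hm : m ≤ σ.n)
    (hl : Decomposable calG (σ.slice 0 m (some k)))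
    (hr : Decomposable calG (σ.slice m σ.n none)) : Decomposable calG σ := by
  let ρ : Elem → Struct := fun e =>
    if e = .inl 3 then σ.slice m σ.n none else σ.slice 0 m (some k)
  have h1 : ρ (.inr (1, 2)) = σ.slice 0 m (some k) := if_neg (by decide)
  have h3 : ρ (.inl 3) = σ.slice m σ.n none := if_pos rfl
  have hσ : composeAll gRconcat ρ = σ := by
    rw [composeAll_gRconcat _ (by rw [h1, slice_gapD, slice_n]; omega), h1, h3, Finset.union_comm]
    exact Struct.ext (by simp only [slice_n]; omega)
      (pairs_eq_union_of_isCut hv hcut _ _).symm hg.symm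
  have hel : gRconcat.elems = {.inl 3, .inr (1, 2)} := by decide
  rw [← hσ]
  refine Decomposable.comp _ _ (by decide) ?_ ?_ ?_ ?_ <;> simp [hel, h1, h3, hl, hr]

lemma decomposable_nest (hv : σ.Valid) {k : ℕ} (hg : σ.gap = some k) (hk : 1 ≤ k)
    (hkn : k < σ.n) (h1n : (1, σ.n) ∈ σ.pairs)
    (h : Decomposable calG (σ.slice 1 (σ.n - 1) (some (k - 1)))) : Decomposable calG σ := by
  let ρ : Elem → Struct := fun e =>
    if e = .inr (1, 4) then ident1 else σ.slice 1 (σ.n - 1) (some (k - 1))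
  have h14 : ρ (.inr (1, 4)) = ident1 := if_pos rfl
  have h23 : ρ (.inr (2, 3)) = σ.slice 1 (σ.n - 1) (some (k - 1)) := if_neg (by decide)
  have hσ : composeAll gNest ρ = σ := by
    rw [composeAll_gNest _ h14 (by rw [h23, slice_gapD, slice_n]; omega), h23]
    have hn : σ.n - 1 - 1 + 2 = σ.n := by omega
    refine Struct.ext (by simp only [slice_n]; omega) ?_ ?_
    · simp only [slice_n, hn]
      exact (pairs_eq_insert_of_mem hv h1n _).symm
    · rw [hg]
      exact congrArg some (by rw [slice_gapD]; omega)
  have hel : gNest.elems = {.inr (1, 4), .inr (2, 3)} := by decide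
  rw [← hσ]
  refine Decomposable.comp _ _ (by decide) ?_ ?_ ?_ ?_ <;>
    simp [hel, h14, h23, h, Decomposable.isId1, show ident1.gap = some 1 from rfl]

lemma isCut_zero (hv : σ.Valid) : σ.IsCut 0 :=
  fun p hp => Or.inr (hv.1 p hp).1

lemma IsCut.succ {m : ℕ} (hcut : σ.IsCut m) (hm : ∀ j, (m + 1, j) ∉ σ.pairs) :
    σ.IsCut (m + 1) := by
  intro p hp
  have : p.1 ≠ m + 1 := fun h => hm p.2 (h ▸ hp)
  rcases hcut p hp with h | h <;> omega

lemma IsCut.snd (hv : σ.Valid) (hnest : σ.Nested) {p : ℕ × ℕ} (hp : p ∈ σ.pairs)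
    (hcut : σ.IsCut (p.1 - 1)) : σ.IsCut p.2 := by
  intro q hq
  by_contra! h
  have hqp : q ≠ p := by rintro rfl; omega
  have := hv.1 p hp
  have := hv.1 q hq
  have := hv.2.1 q hq p hp hqp
  rcases hcut q hq with h' | h'
  · omega
  · exact hnest ⟨p, hp, q, hq, by omega⟩

lemma isCut_pred_fst_of_outermost (hv : σ.Valid) (hnest : σ.Nested) {k : ℕ} {p : ℕ × ℕ}
    (hp : p ∈ σ.pairs) (hpk : p.1 ≤ k ∧ k < p.2)
    (hmin : ∀ q ∈ σ.pairs, q.1 ≤ k ∧ k < q.2 → p.1 ≤ q.1) : σ.IsCut (p.1 - 1) := by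
  intro q hq
  by_contra! h
  have := hv.1 p hp
  have := hv.1 q hq
  have hqp : q ≠ p := by rintro rfl; omega
  have := hv.2.1 q hq p hp hqp
  by_cases hqk : k < q.2
  · have := hmin q hq ⟨by omega, hqk⟩
    omega
  · exact hnest ⟨q, hq, p, hp, by omega⟩

lemma exists_isCut_pred_fst_of_not_isCut (hv : σ.Valid) (hnest : σ.Nested) {k : ℕ}
    (hk : ¬σ.IsCut k) : ∃ p ∈ σ.pairs, p.1 ≤ k ∧ k < p.2 ∧ σ.IsCut (p.1 - 1) := by
  have hne : (σ.pairs.filter fun p => p.1 ≤ k ∧ k < p.2).Nonempty := by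
    simp only [IsCut, not_forall, not_or, not_le, not_lt] at hk
    obtain ⟨p, hp, h2, h1⟩ := hk
    exact ⟨p, Finset.mem_filter.mpr ⟨hp, h1, h2⟩⟩
  obtain ⟨p, hpS, hmin⟩ := Finset.exists_min_image _ Prod.fst hne
  obtain ⟨hp, hpk⟩ := Finset.mem_filter.mp hpS
  exact ⟨p, hp, hpk.1, hpk.2, isCut_pred_fst_of_outermost hv hnest hp hpk
    fun q hq hqk => hmin q (Finset.mem_filter.mpr ⟨hq, hqk⟩)⟩

lemma eq_ident0 (hv : σ.Valid) (hg : σ.gap = none) (hn : σ.n = 1) : σ = ident0 := by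
  refine Struct.ext hn (Finset.eq_empty_of_forall_notMem fun p hp => ?_) hg
  have := hv.1 p hp
  omega

lemma eq_ident1 (hv : σ.Valid) {k : ℕ} (hg : σ.gap = some k) (hk : 1 ≤ k) (hkn : k < σ.n)
    (hn : σ.n = 2) (h12 : (1, 2) ∈ σ.pairs) : σ = ident1 := by
  refine Struct.ext hn ?_ (by rw [hg]; congr 1; omega)
  refine Finset.eq_singleton_iff_unique_mem.mpr ⟨h12, fun p hp => ?_⟩
  have := hv.1 p hp
  ext <;> omega

/-- Loop turns a 0-structure into a 1-structure with a pairing across its gap, and the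
embeddings turn a 1-structure without one into a 0-structure, all without changing `n`;
the bonus term is chosen so that both steps decrease the measure. -/
def complexity (σ : Struct) : ℕ :=
  3 * σ.n + match σ.gap with
    | none => 1
    | some k => if σ.IsCut k then 2 else 0

lemma complexity_lt_of_n_lt {τ : Struct} (h : τ.n < σ.n) : τ.complexity < σ.complexity := by
  have hτ : τ.complexity ≤ 3 * τ.n + 2 := by
    unfold complexity; split <;> (try split) <;> omega
  have hσ : 3 * σ.n ≤ σ.complexity := by unfold complexity; omega
  omega

end Struct

def NestedDecomposableBelow (N : ℕ) : Prop :=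
  ∀ τ : Struct, τ.complexity < N → τ.Valid → 1 ≤ τ.n → τ.Nested →
    Decomposable calG τ

namespace Struct

variable {σ : Struct}

lemma decomposable_slice (ih : NestedDecomposableBelow σ.complexity) (hv : σ.Valid)
    (hnest : σ.Nested) {a b : ℕ} (hab : a < b) (hlt : b - a < σ.n) {g : Option ℕ}
    (hg : ∀ k ∈ g, k ≤ b - a) : Decomposable calG (σ.slice a b g) :=
  ih _ (complexity_lt_of_n_lt hlt) (hv.slice hg) (by rw [slice_n]; omega) (hnest.slice hv a b g)

lemma decomposable_of_gap_none (ih : NestedDecomposableBelow σ.complexity) (hv : σ.Valid)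
    (hne : 1 ≤ σ.n) (hnest : σ.Nested) (hg : σ.gap = none) : Decomposable calG σ := by
  by_cases h1 : ∃ j, (1, j) ∈ σ.pairs
  · obtain ⟨j, hj⟩ := h1
    have hcut : σ.IsCut j := (isCut_zero hv).snd hv hnest hj
    have hjb := hv.1 _ hj
    rcases hjb.2.2.lt_or_eq with hjn | rfl
    · exact decomposable_concat hv hg hcut hjn.le
        (decomposable_slice ih hv hnest (by omega) (by omega) (by rintro _ ⟨⟩))
        (decomposable_slice ih hv hnest hjn (by omega) (by rintro _ ⟨⟩))
    · have hstraddle : ¬({ σ with gap := some 1 } : Struct).IsCut 1 := fun h => by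
        have := h _ hj
        omega
      refine decomposable_loop hg hne (ih _ ?_ (hv.withGap (by rintro _ ⟨⟩; omega)) hne hnest)
      simp [complexity, hg, hstraddle]
  · have hcut : σ.IsCut 1 := (isCut_zero hv).succ fun j hj => h1 ⟨j, hj⟩
    rcases hne.lt_or_eq with hn | hn
    · exact decomposable_concat hv hg hcut hn.le
        (decomposable_slice ih hv hnest (by omega) (by omega) (by rintro _ ⟨⟩))
        (decomposable_slice ih hv hnest hn (by omega) (by rintro _ ⟨⟩))
    · rw [eq_ident0 hv hg hn.symm]
      exact .isId0

lemma decomposable_of_not_isCut_gap (ih : NestedDecomposableBelow σ.complexity)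
    (hv : σ.Valid) (hnest : σ.Nested) {k : ℕ} (hg : σ.gap = some k) (hk : ¬σ.IsCut k) :
    Decomposable calG σ := by
  obtain ⟨p, hp, hpk, hkp, hcut⟩ := exists_isCut_pred_fst_of_not_isCut hv hnest hk
  have hcut' : σ.IsCut p.2 := hcut.snd hv hnest hp
  have hpb := hv.1 p hp
  have hkn : k ≤ σ.n := hv.2.2 k (by rw [hg]; rfl)
  obtain ⟨i, j⟩ := p
  dsimp only at *
  rcases (show i = 1 ∨ 2 ≤ i by omega) with rfl | hi
  · rcases hpb.2.2.lt_or_eq with hjn | rfl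
    · exact decomposable_rconcat hv hg hcut' hkp.le hjn.le
        (decomposable_slice ih hv hnest (by omega) (by omega) (by rintro _ ⟨⟩; omega))
        (decomposable_slice ih hv hnest hjn (by omega) (by rintro _ ⟨⟩))
    · rcases (show σ.n = 2 ∨ 3 ≤ σ.n by omega) with hn | hn
      · rw [eq_ident1 hv hg hpk (by omega) hn (hn ▸ hp)]
        exact .isId1
      · exact decomposable_nest hv hg hpk hkp hp
          (decomposable_slice ih hv hnest (by omega) (by omega) (by rintro _ ⟨⟩; omega))
  · exact decomposable_lconcat hv hg hkn hcut (by omega)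
      (decomposable_slice ih hv hnest (by omega) (by omega) (by rintro _ ⟨⟩))
      (decomposable_slice ih hv hnest (by omega) (by omega) (by rintro _ ⟨⟩; omega))

lemma decomposable_of_isCut_gap (ih : NestedDecomposableBelow σ.complexity) (hv : σ.Valid)
    (hne : 1 ≤ σ.n) (hnest : σ.Nested) {k : ℕ} (hg : σ.gap = some k) (hk : σ.IsCut k) :
    Decomposable calG σ := by
  have hkn : k ≤ σ.n := hv.2.2 k (by rw [hg]; rfl)
  have hzero : Decomposable calG { σ with gap := none } :=
    ih _ (by simp [complexity, hg, hk]) (hv.withGap (by rintro _ ⟨⟩)) hne hnest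
  rcases Nat.eq_zero_or_pos k with rfl | hk0
  · exact decomposable_rembed hg hzero
  rcases hkn.lt_or_eq with hkn | rfl
  · exact decomposable_lconcat hv hg hkn.le hk le_rfl
      (decomposable_slice ih hv hnest hk0 (by omega) (by rintro _ ⟨⟩))
      (decomposable_slice ih hv hnest hkn (by omega) (by rintro _ ⟨⟩; omega))
  · exact decomposable_lembed hg hzero

lemma decomposable_of_nestedDecomposableBelow (ih : NestedDecomposableBelow σ.complexity)
    (hv : σ.Valid) (hne : 1 ≤ σ.n) (hnest : σ.Nested) : Decomposable calG σ := by
  rcases hg : σ.gap with _ | k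
  · exact decomposable_of_gap_none ih hv hne hnest hg
  · by_cases hk : σ.IsCut k
    · exact decomposable_of_isCut_gap ih hv hne hnest hg hk
    · exact decomposable_of_not_isCut_gap ih hv hnest hg hk

end Struct

/-- Every nested structure with at least one base is
𝒢-decomposable. -/
theorem nested_decomposable (σ : Struct) (hv : σ.Valid) (hne : 1 ≤ σ.n)
    (hnested : σ.Nested) : Decomposable calG σ := by
  induction hN : σ.complexity using Nat.strong_induction_on generalizing σ with
  | _ N ih =>
    subst hN
    exact σ.decomposable_of_nestedDecomposableBelow
      (fun τ hτ hv hne hn => ih _ hτ τ hv hne hn rfl) hv hne hnested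

end RNA
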